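/- For every integer n ≥ 2 and all i, j ∈ {1,…,n−1}, the number of bigrassmannian permutations in S_n whose unique left descent is i and whose unique right descent is j equals min{i, j, n−i, n−j}. -/

import Mathlib

namespace Paper

/-- The simple transposition `s_i = (i, i+1)` (1-based) in `S_n`, realized as a
permutation of `Fin n`. For `i` outside `{1, …, n-1}` we set `s i = 1`. -/
def s (n i : ℕ) : Equiv.Perm (Fin n) :=
  if h : 1 ≤ i ∧ i < n then Equiv.swap ⟨i - 1, by omega⟩ ⟨i, by omega⟩ else 1

/-- The length of a permutation: its number of inversions. -/
def len {n : ℕ} (w : Equiv.Perm (Fin n)) : ℕ :=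
  (Finset.univ.filter (fun p : Fin n × Fin n => p.1 < p.2 ∧ w p.2 < w p.1)).card

/-- `i` is a left descent of `w` if `1 ≤ i ≤ n-1` and `ℓ(s_i w) < ℓ(w)`. -/
def IsLeftDescent {n : ℕ} (w : Equiv.Perm (Fin n)) (i : ℕ) : Prop :=
  1 ≤ i ∧ i ≤ n - 1 ∧ len (s n i * w) < len w

/-- `i` is a right descent of `w` if `1 ≤ i ≤ n-1` and `ℓ(w s_i) < ℓ(w)`. -/
def IsRightDescent {n : ℕ} (w : Equiv.Perm (Fin n)) (i : ℕ) : Prop :=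
  1 ≤ i ∧ i ≤ n - 1 ∧ len (w * s n i) < len w

/-- A permutation is bigrassmannian if it has exactly one left descent and
exactly one right descent. -/
def Bigrassmannian {n : ℕ} (w : Equiv.Perm (Fin n)) : Prop :=
  (∃! i, IsLeftDescent w i) ∧ (∃! j, IsRightDescent w j)

/-- One step of the Bruhat order: `w ⋖ t * w` for a transposition `t`
with `ℓ(w) < ℓ(t w)`. -/
def BruhatStep {n : ℕ} (w w' : Equiv.Perm (Fin n)) : Prop :=
  ∃ a b : Fin n, a ≠ b ∧ w' = Equiv.swap a b * w ∧ len w < len w'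

/-- The Bruhat order on `S_n`: the partial order generated by `w < tw` whenever
`t` is a transposition and `ℓ(w) < ℓ(tw)`. -/
def BruhatLE {n : ℕ} : Equiv.Perm (Fin n) → Equiv.Perm (Fin n) → Prop :=
  Relation.ReflTransGen BruhatStep

/-- Strict Bruhat order. -/
def BruhatLT {n : ℕ} (x y : Equiv.Perm (Fin n)) : Prop :=
  BruhatLE x y ∧ x ≠ y

/-- The product `s_a s_{a+1} ⋯ s_b` of consecutive simple transpositions. -/
def ascRun (n a b : ℕ) : Equiv.Perm (Fin n) :=
  ((List.range (b + 1 - a)).map (fun t => s n (a + t))).prod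

/-- For `i ≤ j`: `b(i,j,k) = (s_i ⋯ s_{j+k})(s_{i-1} ⋯ s_{j+k-1}) ⋯ (s_{i-k} ⋯ s_j)`. -/
def bAux (n i j k : ℕ) : Equiv.Perm (Fin n) :=
  ((List.range (k + 1)).map (fun m => ascRun n (i - m) (j + k - m))).prod

/-- The bigrassmannian permutation `b(i,j,k)`; for `j < i` it is `b(j,i,k)⁻¹`. -/
def b (n i j k : ℕ) : Equiv.Perm (Fin n) :=
  if i ≤ j then bAux n i j k else (bAux n j i k)⁻¹

/-- The value `w(i)` of a permutation `w ∈ S_n` at `i ∈ {1, …, n}`, 1-based. -/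
def act {n : ℕ} (w : Equiv.Perm (Fin n)) (i : ℕ) : ℕ :=
  if h : 1 ≤ i ∧ i ≤ n then ((w ⟨i - 1, by omega⟩ : Fin n) : ℕ) + 1 else i

/-- The essential set of a permutation `w ∈ S_n`. -/
def Ess {n : ℕ} (w : Equiv.Perm (Fin n)) : Set (ℕ × ℕ) :=
  {p | 1 ≤ p.1 ∧ p.1 ≤ n - 1 ∧ 1 ≤ p.2 ∧ p.2 ≤ n - 1 ∧
    p.1 < act w⁻¹ p.2 ∧ p.2 < act w p.1 ∧
    act w (p.1 + 1) ≤ p.2 ∧ act w⁻¹ (p.2 + 1) ≤ p.1}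

/-- The rank function `r_w(i,j) = |{k ≤ i : w(k) ≤ j}|` (1-based). -/
def rnk {n : ℕ} (w : Equiv.Perm (Fin n)) (i j : ℕ) : ℕ :=
  ((Finset.Icc 1 i).filter (fun k => act w k ≤ j)).card

/-- The co-rank function `t_w(i,j) = min{i,j} - r_w(i,j)`. -/
def cork {n : ℕ} (w : Equiv.Perm (Fin n)) (i j : ℕ) : ℕ :=
  min i j - rnk w i j

/-- The set of bigrassmannian permutations `y ≤ w` in Bruhat order. -/
def BSet {n : ℕ} (w : Equiv.Perm (Fin n)) : Set (Equiv.Perm (Fin n)) :=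
  {y | Bigrassmannian y ∧ BruhatLE y w}

/-- The set of Bruhat-maximal elements of `BSet w`. -/
def BM {n : ℕ} (w : Equiv.Perm (Fin n)) : Set (Equiv.Perm (Fin n)) :=
  {y ∈ BSet w | ∀ z ∈ BSet w, BruhatLE y z → z = y}

/-!
Read a permutation `w` of `Fin n` in one-line notation as the permutation `t ↦ w(t)` of `ℕ`
(1-based, fixing `0` and every `t > n`); a right descent at `k` is then exactly
`w(k + 1) < w(k)`. If `w` descends only at `j` and `w⁻¹` only at `i`, then `w` increases on
`[0, j]` and on `[j + 1, ∞)`, and `w⁻¹` on `[0, i]` and `[i + 1, ∞)`. Playing these runs off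
against each other forces, with `p = w(j + 1)`: `w` fixes `[1, p)`, maps `[p, j]` onto
`[i + 1, i + 1 + j - p]` and `[j + 1, j + 1 + i - p]` onto `[p, i]`, and fixes everything
above. Hence `w ↦ w(j + 1)` is a bijection onto `max 1 (i + j + 1 - n) ≤ p ≤ min i j`, an
interval of length `min(i, j, n - i, n - j)`.
-/

open Equiv

section Length

variable {n : ℕ}

def inversions (w : Perm (Fin n)) : Finset (Fin n × Fin n) :=
  {p | p.1 < p.2 ∧ w p.2 < w p.1}

lemma len_eq_card_inversions (w : Perm (Fin n)) : len w = (inversions w).card := rfl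

lemma mem_inversions {w : Perm (Fin n)} {p : Fin n × Fin n} :
    p ∈ inversions w ↔ p.1 < p.2 ∧ w p.2 < w p.1 := by
  simp [inversions]

lemma len_inv (w : Perm (Fin n)) : len w⁻¹ = len w := by
  rw [len_eq_card_inversions, len_eq_card_inversions]
  refine Finset.card_nbij' (fun p => (w⁻¹ p.2, w⁻¹ p.1)) (fun p => (w p.2, w p.1))
    ?_ ?_ (fun _ _ => by simp) (fun _ _ => by simp)
  all_goals
    intro p hp
    rw [Finset.mem_coe, mem_inversions] at hp ⊢
    simpa using hp.symm

lemma swap_lt_swap {a b x y : Fin n} (hab : (b : ℕ) = a + 1) (hxy : x < y)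
    (hne : (x, y) ≠ (a, b)) : swap a b x < swap a b y := by
  simp only [ne_eq, Prod.mk.injEq, Fin.ext_iff, Fin.lt_def] at hne hxy ⊢
  simp only [swap_apply_def, Fin.ext_iff]
  split_ifs <;> omega

lemma card_erase_inversions_mul_swap {a b : Fin n} (hab : (b : ℕ) = a + 1)
    (w : Perm (Fin n)) :
    ((inversions (w * swap a b)).erase (a, b)).card = ((inversions w).erase (a, b)).card := by
  set φ : Fin n × Fin n → Fin n × Fin n := fun p => (swap a b p.1, swap a b p.2)
  have mapsTo : ∀ u : Perm (Fin n),
      Set.MapsTo φ ((inversions (u * swap a b)).erase (a, b)) ((inversions u).erase (a, b)) := by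
    intro u p hp
    rw [Finset.mem_coe, Finset.mem_erase, mem_inversions] at hp ⊢
    refine ⟨fun h => ?_, swap_lt_swap hab hp.2.1 hp.1, hp.2.2⟩
    simp only [φ, Prod.mk.injEq, swap_apply_eq_iff, swap_apply_left, swap_apply_right] at h
    have := hp.2.1
    rw [h.1, h.2, Fin.lt_def] at this
    omega
  refine Finset.card_nbij' φ φ (mapsTo w) ?_ (fun _ _ => by simp [φ]) (fun _ _ => by simp [φ])
  simpa [mul_assoc] using mapsTo (w * swap a b)

lemma len_mul_swap_lt_iff {a b : Fin n} (hab : (b : ℕ) = a + 1) (w : Perm (Fin n)) :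
    len (w * swap a b) < len w ↔ w b < w a := by
  have hlt : a < b := by rw [Fin.lt_def]; omega
  have hmem : (a, b) ∈ inversions w ↔ w b < w a := by simp [mem_inversions, hlt]
  have hmem' : (a, b) ∈ inversions (w * swap a b) ↔ w a < w b := by
    simp [mem_inversions, hlt]
  have hcard := card_erase_inversions_mul_swap hab w
  simp only [len_eq_card_inversions, Finset.card_erase_eq_ite, hmem, hmem'] at hcard ⊢
  have hne : w a ≠ w b := w.injective.ne hlt.ne
  rcases hne.lt_or_gt with h | h
  · have := Finset.card_pos.2 ⟨_, hmem'.2 h⟩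
    simp only [h, h.not_gt, if_true, if_false] at hcard
    omega
  · have := Finset.card_pos.2 ⟨_, hmem.2 h⟩
    simp only [h, h.not_gt, if_true, if_false] at hcard
    omega

end Length

def HasOnlyDescentAt (f : ℕ → ℕ) (j : ℕ) : Prop :=
  ∀ k, f (k + 1) < f k ↔ k = j

namespace HasOnlyDescentAt

variable {σ : Perm ℕ} {j : ℕ}

lemma lt_apply_succ (hσ : HasOnlyDescentAt σ j) {k : ℕ} (hk : k ≠ j) : σ k < σ (k + 1) :=
  lt_of_le_of_ne (not_lt.1 fun h => hk ((hσ k).1 h)) (σ.injective.ne (by omega))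

lemma add_sub_le (hσ : HasOnlyDescentAt σ j) {a b : ℕ} (hab : a ≤ b) (hj : b ≤ j ∨ j < a) :
    σ a + (b - a) ≤ σ b := by
  induction b, hab using Nat.le_induction with
  | base => simp
  | succ b hab ih =>
    have := hσ.lt_apply_succ (k := b) (by omega)
    have := ih (by omega)
    omega

end HasOnlyDescentAt

/-- Exchanges the adjacent blocks `[p, j]` and `[j + 1, j + 1 + i - p]`. -/
def blockSwap (i j p t : ℕ) : ℕ :=
  if t < p then t
  else if t ≤ j then t + (i + 1 - p)
  else if t ≤ j + 1 + i - p then t - (j + 1 - p)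
  else t

structure IsBigrassmannianPerm (σ : Perm ℕ) (i j N : ℕ) : Prop where
  right : HasOnlyDescentAt σ j
  left : HasOnlyDescentAt ⇑σ⁻¹ i
  apply_of_lt : ∀ t, N < t → σ t = t

namespace IsBigrassmannianPerm

variable {σ : Perm ℕ} {i j N : ℕ}

lemma symm (h : IsBigrassmannianPerm σ i j N) : IsBigrassmannianPerm σ⁻¹ j i N where
  right := h.left
  left := by simpa only [inv_inv] using h.right
  apply_of_lt t ht := Perm.inv_eq_iff_eq.2 (h.apply_of_lt t ht).symm

lemma le_apply (h : IsBigrassmannianPerm σ i j N) {t : ℕ} (ht : t ≤ j) : t ≤ σ t := by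
  have := h.right.add_sub_le (Nat.zero_le t) (.inl ht)
  omega

lemma apply_le (h : IsBigrassmannianPerm σ i j N) {t : ℕ} (ht : j < t) : σ t ≤ t := by
  rcases Nat.lt_or_ge N t with hN | hN
  · exact (h.apply_of_lt t hN).le
  · have := h.right.add_sub_le (show t ≤ N + 1 by omega) (.inr ht)
    rw [h.apply_of_lt (N + 1) (by omega)] at this
    omega

lemma apply_eq_self_of_apply_le (h : IsBigrassmannianPerm σ i j N) {t : ℕ} (ht : t ≤ j)
    (hσt : σ t ≤ i) : σ t = t := by
  have := h.symm.le_apply hσt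
  rw [Perm.inv_eq_iff_eq.2 rfl] at this
  exact le_antisymm this (h.le_apply ht)

lemma apply_eq_self_of_lt_apply (h : IsBigrassmannianPerm σ i j N) {t : ℕ} (ht : j < t)
    (hσt : i < σ t) : σ t = t := by
  have := h.symm.apply_le hσt
  rw [Perm.inv_eq_iff_eq.2 rfl] at this
  exact le_antisymm (h.apply_le ht) this

lemma apply_succ_le (h : IsBigrassmannianPerm σ i j N) : σ (j + 1) ≤ j ∧ σ (j + 1) ≤ i := by
  have hle := h.apply_le j.lt_add_one
  have hdesc := (h.right j).2 rfl
  have hne : σ (j + 1) ≠ j + 1 := by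
    intro hfix
    -- then `σ` fixes every `t > j`, so it cannot move `j` above `j + 1`
    have hfixed : ∀ t, j < t → σ t = t := fun t ht => by
      have := h.right.add_sub_le (show j + 1 ≤ t from ht) (.inr j.lt_add_one)
      exact le_antisymm (h.apply_le ht) (by omega)
    have := hfixed (σ j) (by omega)
    exact absurd (σ.injective this) (by omega)
  exact ⟨by omega, not_lt.1 fun hi => hne (h.apply_eq_self_of_lt_apply j.lt_add_one hi)⟩

lemma apply_add_eq (h : IsBigrassmannianPerm σ i j N) {m : ℕ} (hm : m ≤ i - σ (j + 1)) :
    σ (j + 1 + m) = σ (j + 1) + m := by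
  obtain ⟨hpj, hpi⟩ := h.apply_succ_le
  have hinv : σ⁻¹ (σ (j + 1)) = j + 1 := Perm.inv_eq_iff_eq.2 rfl
  have hback : σ (σ⁻¹ i) = i := Perm.eq_inv_iff_eq.1 rfl
  -- squeeze `σ⁻¹ i` between the run of `σ⁻¹` up to `i` and the run of `σ` from `j + 1`
  have h₁ := h.left.add_sub_le hpi (.inl le_rfl)
  have h₂ := h.right.add_sub_le (show j + 1 ≤ σ⁻¹ i by omega) (.inr j.lt_add_one)
  have h₃ := h.right.add_sub_le (show j + 1 ≤ j + 1 + m by omega) (.inr j.lt_add_one)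
  have h₄ := h.right.add_sub_le (show j + 1 + m ≤ σ⁻¹ i by omega) (.inr (by omega))
  omega

lemma add_le_add_apply_succ (h : IsBigrassmannianPerm σ i j N) :
    i + j + 1 ≤ N + σ (j + 1) := by
  obtain ⟨hpj, hpi⟩ := h.apply_succ_le
  have hlast := h.apply_add_eq (m := i - σ (j + 1)) le_rfl
  by_contra! hN
  have := h.apply_of_lt _ (show N < j + 1 + (i - σ (j + 1)) by omega)
  omega

lemma apply_eq_self_of_lt_inv_apply (h : IsBigrassmannianPerm σ i j N) {t : ℕ}
    (ht : t < σ⁻¹ (i + 1)) : σ t = t := by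
  have hq := h.symm.apply_succ_le.2
  have hback : σ (σ⁻¹ (i + 1)) = i + 1 := Perm.eq_inv_iff_eq.1 rfl
  have := h.right.add_sub_le ht.le (.inl hq)
  exact h.apply_eq_self_of_apply_le (by omega) (by omega)

lemma inv_apply_succ (h : IsBigrassmannianPerm σ i j N) : σ⁻¹ (i + 1) = σ (j + 1) := by
  obtain ⟨hpj, hpi⟩ := h.apply_succ_le
  obtain ⟨hqi, hqj⟩ := h.symm.apply_succ_le
  rcases lt_trichotomy (σ⁻¹ (i + 1)) (σ (j + 1)) with hlt | heq | hgt
  · have := h.symm.apply_eq_self_of_lt_inv_apply (by rwa [inv_inv])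
    rw [Perm.inv_eq_iff_eq] at this
    have hback : σ (σ⁻¹ (i + 1)) = i + 1 := Perm.eq_inv_iff_eq.1 rfl
    omega
  · exact heq
  · have := Perm.inv_eq_iff_eq.2 (h.apply_eq_self_of_lt_inv_apply hgt).symm
    have hinv : σ⁻¹ (σ (j + 1)) = j + 1 := Perm.inv_eq_iff_eq.2 rfl
    omega

lemma apply_eq_blockSwap (h : IsBigrassmannianPerm σ i j N) (t : ℕ) :
    σ t = blockSwap i j (σ (j + 1)) t := by
  obtain ⟨hpj, hpi⟩ := h.apply_succ_le
  have hq := h.inv_apply_succ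
  unfold blockSwap
  split_ifs with h₁ h₂ h₃
  · exact h.apply_eq_self_of_lt_inv_apply (hq ▸ h₁)
  · have := h.symm.apply_add_eq (m := t - σ (j + 1)) (by omega)
    rw [hq, Perm.inv_eq_iff_eq] at this
    rw [show t = σ (j + 1) + (t - σ (j + 1)) by omega, ← this]
    omega
  · have := h.apply_add_eq (m := t - (j + 1)) (by omega)
    rw [show j + 1 + (t - (j + 1)) = t by omega] at this
    omega
  · have hlast := h.apply_add_eq (m := i - σ (j + 1)) le_rfl
    have := h.right.add_sub_le (show j + 1 + (i - σ (j + 1)) ≤ t by omega) (.inr (by omega))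
    exact h.apply_eq_self_of_lt_apply (by omega) (by omega)

lemma ext_of_apply_succ_eq {τ : Perm ℕ} {N' : ℕ} (h : IsBigrassmannianPerm σ i j N)
    (h' : IsBigrassmannianPerm τ i j N') (hστ : σ (j + 1) = τ (j + 1)) : σ = τ := by
  ext t
  rw [h.apply_eq_blockSwap, h'.apply_eq_blockSwap, hστ]

end IsBigrassmannianPerm

lemma blockSwap_blockSwap (i j p t : ℕ) : blockSwap j i p (blockSwap i j p t) = t := by
  unfold blockSwap
  split_ifs <;> omega

def blockSwapPerm (i j p : ℕ) : Perm ℕ :=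
  ⟨blockSwap i j p, blockSwap j i p, blockSwap_blockSwap i j p, blockSwap_blockSwap j i p⟩

@[simp] lemma blockSwapPerm_apply (i j p t : ℕ) : blockSwapPerm i j p t = blockSwap i j p t :=
  rfl

lemma hasOnlyDescentAt_blockSwap {i j p : ℕ} (hpi : p ≤ i) (hpj : p ≤ j) :
    HasOnlyDescentAt (blockSwap i j p) j := by
  intro k
  unfold blockSwap
  split_ifs <;> omega

lemma isBigrassmannianPerm_blockSwapPerm {i j p N : ℕ} (hpi : p ≤ i) (hpj : p ≤ j)
    (hN : i + j + 1 ≤ N + p) : IsBigrassmannianPerm (blockSwapPerm i j p) i j N where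
  right := hasOnlyDescentAt_blockSwap hpi hpj
  left := hasOnlyDescentAt_blockSwap hpj hpi
  apply_of_lt t ht := by
    rw [blockSwapPerm_apply, blockSwap]
    split_ifs <;> omega

section Act

variable {n : ℕ}

lemma act_zero (w : Perm (Fin n)) : act w 0 = 0 := by
  simp [act]

lemma act_of_lt (w : Perm (Fin n)) {t : ℕ} (ht : n < t) : act w t = t := by
  rw [act, dif_neg (by omega)]

lemma act_le_self (w : Perm (Fin n)) {t : ℕ} (ht : n ≤ t) : act w t ≤ t := by
  unfold act
  split_ifs
  · have := (w ⟨t - 1, by omega⟩).is_lt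
    omega
  · exact le_rfl

lemma act_inv_act (w : Perm (Fin n)) (t : ℕ) : act w⁻¹ (act w t) = t := by
  unfold act
  split_ifs <;> first | omega | simp; omega

def actPerm (w : Perm (Fin n)) : Perm ℕ :=
  ⟨act w, act w⁻¹, act_inv_act w, fun t => by simpa using act_inv_act w⁻¹ t⟩

@[simp] lemma actPerm_apply (w : Perm (Fin n)) (t : ℕ) : actPerm w t = act w t := rfl

lemma actPerm_inv (w : Perm (Fin n)) : actPerm w⁻¹ = (actPerm w)⁻¹ := rfl

lemma actPerm_injective : Function.Injective (actPerm (n := n)) := by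
  intro w w' h
  ext x
  have := DFunLike.congr_fun h ((x : ℕ) + 1)
  simpa [act, x.is_lt] using this

lemma isRightDescent_iff_act (w : Perm (Fin n)) (k : ℕ) :
    IsRightDescent w k ↔ act w (k + 1) < act w k := by
  by_cases hk : 1 ≤ k ∧ k < n
  · have hs : s n k = swap ⟨k - 1, by omega⟩ ⟨k, hk.2⟩ := dif_pos hk
    rw [IsRightDescent, hs, len_mul_swap_lt_iff (by simp; omega), act, act,
      dif_pos (by omega), dif_pos (by omega)]
    simp only [Nat.add_sub_cancel, Fin.lt_def, add_lt_add_iff_right]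
    exact ⟨fun h => h.2.2, fun h => ⟨hk.1, by omega, h⟩⟩
  · have hact : ¬ act w (k + 1) < act w k := by
      rcases Nat.eq_zero_or_pos k with rfl | hpos
      · simp [act_zero]
      · have := act_le_self w (show n ≤ k by omega)
        rw [act_of_lt w (show n < k + 1 by omega)]
        omega
    simp only [IsRightDescent, hact, iff_false]
    exact fun h => hk ⟨h.1, by omega⟩

lemma isLeftDescent_iff_isRightDescent_inv (w : Perm (Fin n)) (k : ℕ) :
    IsLeftDescent w k ↔ IsRightDescent w⁻¹ k := by
  have hs : (s n k)⁻¹ = s n k := by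
    unfold s
    split_ifs
    · exact swap_inv _ _
    · exact inv_one
  have : len (s n k * w) = len (w⁻¹ * s n k) := by
    rw [← len_inv, mul_inv_rev, hs]
  rw [IsLeftDescent, IsRightDescent, this, len_inv]

lemma exists_actPerm_eq {σ : Perm ℕ} (h0 : σ 0 = 0) (hN : ∀ t, n < t → σ t = t) :
    ∃ w : Perm (Fin n), actPerm w = σ := by
  have hmaps : ∀ τ : Perm ℕ, τ 0 = 0 → (∀ t, n < t → τ t = t) →
      ∀ t, 1 ≤ t → t ≤ n → 1 ≤ τ t ∧ τ t ≤ n := by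
    intro τ h0 hN t h1 h2
    constructor
    · by_contra hc
      have := τ.injective ((Nat.lt_one_iff.1 (not_le.1 hc)).trans h0.symm)
      omega
    · by_contra hc
      have := τ.injective (hN _ (not_le.1 hc))
      omega
  have hσ := hmaps σ h0 hN
  have hσ' := hmaps σ⁻¹ (Perm.inv_eq_iff_eq.2 h0.symm)
    (fun t ht => Perm.inv_eq_iff_eq.2 (hN t ht).symm)
  refine ⟨⟨fun x => ⟨σ (x + 1) - 1, ?_⟩, fun x => ⟨σ⁻¹ (x + 1) - 1, ?_⟩, fun x => ?_,
    fun x => ?_⟩, ?_⟩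
  · have := hσ (x + 1) (by omega) x.is_lt; omega
  · have := hσ' (x + 1) (by omega) x.is_lt; omega
  · have := hσ (x + 1) (by omega) x.is_lt
    ext
    simp [Nat.sub_add_cancel this.1]
  · have := hσ' (x + 1) (by omega) x.is_lt
    ext
    simp only [Nat.sub_add_cancel this.1]
    simp
  · ext t
    simp only [actPerm_apply, act, coe_fn_mk]
    split_ifs with ht
    · have := hσ t ht.1 ht.2
      rw [Nat.sub_add_cancel ht.1]
      omega
    · rcases Nat.eq_zero_or_pos t with rfl | hpos
      · exact h0.symm
      · exact (hN t (by omega)).symm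

lemma bigrassmannian_iff_isBigrassmannianPerm (w : Perm (Fin n)) (i j : ℕ) :
    (Bigrassmannian w ∧ IsLeftDescent w i ∧ IsRightDescent w j) ↔
      IsBigrassmannianPerm (actPerm w) i j n := by
  have unique_iff : ∀ (P : ℕ → Prop) (a : ℕ), ((∃! x, P x) ∧ P a) ↔ ∀ x, P x ↔ x = a :=
    fun P a => ⟨fun ⟨⟨x, _, hx⟩, ha⟩ y => ⟨fun hy => (hx y hy).trans (hx a ha).symm,
      fun hy => hy ▸ ha⟩, fun h => ⟨⟨a, (h a).2 rfl, fun y => (h y).1⟩, (h a).2 rfl⟩⟩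
  have hright : HasOnlyDescentAt (actPerm w) j ↔ ∀ k, IsRightDescent w k ↔ k = j := by
    simp only [HasOnlyDescentAt, actPerm_apply, isRightDescent_iff_act]
  have hleft : HasOnlyDescentAt ⇑(actPerm w)⁻¹ i ↔ ∀ k, IsLeftDescent w k ↔ k = i := by
    simp only [HasOnlyDescentAt, ← actPerm_inv, actPerm_apply,
      isLeftDescent_iff_isRightDescent_inv, isRightDescent_iff_act]
  rw [Bigrassmannian, and_and_and_comm, unique_iff, unique_iff, ← hright, ← hleft]
  exact ⟨fun ⟨hl, hr⟩ => ⟨hr, hl, fun t ht => act_of_lt w ht⟩, fun h => ⟨h.left, h.right⟩⟩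


lemma actPerm_apply_succ_mem_Icc {w : Perm (Fin n)} {i j : ℕ}
    (hw : Bigrassmannian w ∧ IsLeftDescent w i ∧ IsRightDescent w j) :
    actPerm w (j + 1) ∈ Set.Icc (max 1 (i + j + 1 - n)) (min i j) := by
  have hσ := (bigrassmannian_iff_isBigrassmannianPerm w i j).1 hw
  have hpos : actPerm w (j + 1) ≠ 0 := by
    rw [← act_zero w, ← actPerm_apply]
    exact (actPerm w).injective.ne j.succ_ne_zero
  have := hσ.apply_succ_le
  have := hσ.add_le_add_apply_succ
  rw [Set.mem_Icc]
  omega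

lemma exists_actPerm_apply_succ_eq {i j p : ℕ}
    (hp : p ∈ Set.Icc (max 1 (i + j + 1 - n)) (min i j)) :
    ∃ w : Perm (Fin n), (Bigrassmannian w ∧ IsLeftDescent w i ∧ IsRightDescent w j) ∧
      actPerm w (j + 1) = p := by
  rw [Set.mem_Icc] at hp
  have hb : IsBigrassmannianPerm (blockSwapPerm i j p) i j n :=
    isBigrassmannianPerm_blockSwapPerm (by omega) (by omega) (by omega)
  obtain ⟨w, hw⟩ := exists_actPerm_eq
    (by rw [blockSwapPerm_apply, blockSwap, if_pos (by omega)]) hb.apply_of_lt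
  refine ⟨w, (bigrassmannian_iff_isBigrassmannianPerm w i j).2 (hw ▸ hb), ?_⟩
  rw [hw, blockSwapPerm_apply, blockSwap]
  split_ifs <;> omega

end Act

theorem stmt1_general (n : ℕ) (i j : ℕ) :
    Nat.card {w : Equiv.Perm (Fin n) //
        Bigrassmannian w ∧ IsLeftDescent w i ∧ IsRightDescent w j} =
      min (min i j) (min (n - i) (n - j)) := by
  set φ : {w : Perm (Fin n) // Bigrassmannian w ∧ IsLeftDescent w i ∧ IsRightDescent w j} → ℕ :=
    fun w => actPerm w.1 (j + 1)
  have hσ (w : {w : Perm (Fin n) // Bigrassmannian w ∧ IsLeftDescent w i ∧ IsRightDescent w j}) :=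
    (bigrassmannian_iff_isBigrassmannianPerm w.1 i j).1 w.2
  have hinj : Function.Injective φ := fun w w' h =>
    Subtype.ext (actPerm_injective ((hσ w).ext_of_apply_succ_eq (hσ w') h))
  have hrange : Set.range φ = Set.Icc (max 1 (i + j + 1 - n)) (min i j) := by
    ext p
    refine ⟨?_, fun hp => ?_⟩
    · rintro ⟨w, rfl⟩
      exact actPerm_apply_succ_mem_Icc w.2
    · obtain ⟨w, hw, rfl⟩ := exists_actPerm_apply_succ_eq hp
      exact ⟨⟨w, hw⟩, rfl⟩
  rw [← Nat.card_range_of_injective hinj, hrange, Nat.card_eq_fintype_card,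
    Fintype.card_ofFinset, Nat.card_Icc]
  omega

theorem stmt1 (n : ℕ) (hn : 2 ≤ n) (i j : ℕ)
    (hi1 : 1 ≤ i) (hi2 : i ≤ n - 1) (hj1 : 1 ≤ j) (hj2 : j ≤ n - 1) :
    Nat.card {w : Equiv.Perm (Fin n) //
        Bigrassmannian w ∧ IsLeftDescent w i ∧ IsRightDescent w j} =
      min (min i j) (min (n - i) (n - j)) :=
  stmt1_general n i j

end Paper
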